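/- The function φ₀(x) = e^{−x₁/2} K₀(|x|/2), defined on ℝ² \ {0}, satisfies Δφ₀ + ∂₁φ₀ = 0 at every point of ℝ² \ {0}. -/

import Mathlib

noncomputable section

open Real MeasureTheory

/-- The Euclidean plane ℝ². -/
abbrev R2 : Type := EuclideanSpace ℝ (Fin 2)

/-- The i-th standard basis vector of ℝ². -/
noncomputable def e2 (i : Fin 2) : R2 := EuclideanSpace.single i 1

/-- Partial derivative ∂ᵢu(x). -/
noncomputable def pd (i : Fin 2) (u : R2 → ℝ) (x : R2) : ℝ := fderiv ℝ u x (e2 i)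

/-- Second partial derivative ∂ᵢ∂ⱼu(x). -/
noncomputable def pd2 (i j : Fin 2) (u : R2 → ℝ) (x : R2) : ℝ := pd i (fun y => pd j u y) x

/-- Squared norm of the gradient, |Du(x)|². -/
noncomputable def gradSq (u : R2 → ℝ) (x : R2) : ℝ := ∑ i, (pd i u x) ^ 2

/-- The translator equation with direction V = (v₁,v₂,v₃):
div(Du/√(1+|Du|²)) = (v₃ − v₁∂₁u − v₂∂₂u)/√(1+|Du|²) on Ω. -/
def TranslatorEqnOn (V : Fin 3 → ℝ) (u : R2 → ℝ) (Ω : Set R2) : Prop :=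
  ∀ x ∈ Ω, (∑ i, pd i (fun y => pd i u y / Real.sqrt (1 + gradSq u y)) x)
    = (V 2 - V 0 * pd 0 u x - V 1 * pd 1 u x) / Real.sqrt (1 + gradSq u x)

/-- The second-order coefficients a_{jk} = (1+|Du|²)δ_{jk} − ∂ⱼu ∂ₖu of the
linearization of the translator equation. -/
noncomputable def acoef (u : R2 → ℝ) (j k : Fin 2) (x : R2) : ℝ :=
  (1 + gradSq u x) * (if j = k then 1 else 0) - pd j u x * pd k u x

/-- The first-order coefficients b_j of the linearization of the translator equation
with direction (1,0,0). -/
noncomputable def bcoef (u : R2 → ℝ) (j : Fin 2) (x : R2) : ℝ :=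
  (1 + gradSq u x) * (if j = 0 then 1 else 0)
    - 2 * (∑ k, pd k u x * pd2 j k u x)
    - (pd 0 u x + (∑ k, pd2 k k u x)
        - 3 * (∑ k, ∑ l, pd k u x * pd l u x * pd2 k l u x) / (1 + gradSq u x)) * pd j u x

/-- The quasilinear translator operator
Qφ = (1+|Dφ|²)(Δφ+∂₁φ) − Σ_{i,j} ∂ᵢφ ∂ⱼφ ∂ᵢⱼφ. -/
noncomputable def Qop (φ : R2 → ℝ) (x : R2) : ℝ :=
  (1 + gradSq φ x) * ((∑ k, pd2 k k φ x) + pd 0 φ x)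
    - ∑ i, ∑ j, pd i φ x * pd j φ x * pd2 i j φ x

/-- Modified Bessel function of the second kind of order 0:
K₀(x) = ∫₀^∞ e^{−x cosh t} dt. -/
noncomputable def K0 (x : ℝ) : ℝ := ∫ t in Set.Ioi (0 : ℝ), Real.exp (-(x * Real.cosh t))

/-- The point (a, b) ∈ ℝ². -/
noncomputable def pt (a b : ℝ) : R2 := (EuclideanSpace.equiv (Fin 2) ℝ).symm ![a, b]

/-! Writing `φ₀ = e^{-x₁/2} g`, the operator `Δ + ∂₁` becomes `e^{-x₁/2} (Δ - 1/4)` acting on `g`.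
For a radial `g(x) = f(|x|)` one has `Δg = f'' + f'/r`, so with `f(r) = K₀(r/2)` the claim is the
modified Bessel equation `K₀'' + K₀'/s - K₀ = 0`. Differentiating under the integral sign gives
`K₀⁽ⁿ⁾(s) = (-1)ⁿ ∫₀^∞ coshⁿ t e^{-s cosh t} dt`, and the Bessel equation comes from integrating
`(sinh t e^{-s cosh t})' = (cosh t - s sinh² t) e^{-s cosh t}` over `(0, ∞)`, using
`sinh² = cosh² - 1`. -/

open Set Filter Topology
open scoped Nat

def coshMoment (n : ℕ) (x : ℝ) : ℝ := ∫ t in Ioi (0 : ℝ), cosh t ^ n * exp (-(x * cosh t))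

lemma pow_mul_exp_neg_mul_le {c u : ℝ} (hc : 0 < c) (hu : 0 ≤ u) (n : ℕ) :
    u ^ n * exp (-(c * u)) ≤ n ! / c ^ n := by
  have h := pow_div_factorial_le_exp (c * u) (mul_nonneg hc.le hu) n
  rw [div_le_iff₀ (by positivity), mul_pow] at h
  rw [le_div_iff₀ (by positivity), exp_neg]
  calc u ^ n * (exp (c * u))⁻¹ * c ^ n = c ^ n * u ^ n * (exp (c * u))⁻¹ := by ring
    _ ≤ exp (c * u) * n ! * (exp (c * u))⁻¹ := by gcongr
    _ = n ! := by field_simp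

lemma cosh_pow_mul_exp_neg_le (n : ℕ) {x t : ℝ} (hx : 0 < x) (ht : 0 ≤ t) :
    cosh t ^ n * exp (-(x * cosh t)) ≤ n ! / (x / 2) ^ n * exp (-(x / 2) * t) := by
  have hcosh : t ≤ cosh t := (self_le_sinh_iff.mpr ht).trans (sinh_lt_cosh t).le
  calc cosh t ^ n * exp (-(x * cosh t))
      = cosh t ^ n * exp (-(x / 2 * cosh t)) * exp (-(x / 2 * cosh t)) := by
        rw [mul_assoc, ← exp_add]; ring_nf
    _ ≤ n ! / (x / 2) ^ n * exp (-(x / 2 * t)) := by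
        gcongr
        exact pow_mul_exp_neg_mul_le (by positivity) (cosh_pos t).le n
    _ = n ! / (x / 2) ^ n * exp (-(x / 2) * t) := by rw [neg_mul]

lemma integrableOn_cosh_pow_mul_exp_neg (n : ℕ) {x : ℝ} (hx : 0 < x) :
    IntegrableOn (fun t => cosh t ^ n * exp (-(x * cosh t))) (Ioi 0) := by
  refine Integrable.mono' ((exp_neg_integrableOn_Ioi 0 (half_pos hx)).const_mul (n ! / (x / 2) ^ n))
    (by fun_prop) ?_
  filter_upwards [ae_restrict_mem measurableSet_Ioi] with t ht
  rw [norm_of_nonneg (by positivity)]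
  exact cosh_pow_mul_exp_neg_le n hx (le_of_lt ht)

lemma hasDerivAt_coshMoment (n : ℕ) {x : ℝ} (hx : 0 < x) :
    HasDerivAt (coshMoment n) (-coshMoment (n + 1) x) x := by
  have key := hasDerivAt_integral_of_dominated_loc_of_deriv_le
    (F := fun z t => cosh t ^ n * exp (-(z * cosh t)))
    (F' := fun z t => -(cosh t ^ (n + 1) * exp (-(z * cosh t))))
    (μ := volume.restrict (Ioi 0)) (Ioi_mem_nhds (half_lt_self hx))
    (.of_forall fun z => by fun_prop) (integrableOn_cosh_pow_mul_exp_neg n hx) (by fun_prop)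
    ?_ (integrableOn_cosh_pow_mul_exp_neg (n + 1) (half_pos hx)) ?_
  · rw [coshMoment, ← integral_neg]
    exact key.2
  · refine .of_forall fun t z hz => ?_
    rw [norm_neg, norm_of_nonneg (by positivity)]
    gcongr
    exact (mem_Ioi.mp hz).le
  · refine .of_forall fun t z _ => ?_
    refine ((((hasDerivAt_id z).mul_const (cosh t)).neg.exp).const_mul (cosh t ^ n)).congr_deriv ?_
    simp only [id, Pi.neg_apply]
    ring

lemma tendsto_cosh_pow_mul_exp_neg_atTop (n : ℕ) {x : ℝ} (hx : 0 < x) :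
    Tendsto (fun t => cosh t ^ n * exp (-(x * cosh t))) atTop (𝓝 0) := by
  have hdecay : Tendsto (fun t => n ! / (x / 2) ^ n * exp (-(x / 2) * t)) atTop (𝓝 0) := by
    simpa only [mul_zero, Function.comp_def, id, neg_mul] using
      (tendsto_exp_neg_atTop_nhds_zero.comp (tendsto_id.const_mul_atTop (half_pos hx))).const_mul
        (n ! / (x / 2) ^ n)
  refine squeeze_zero' (.of_forall fun t => by positivity) ?_ hdecay
  filter_upwards [eventually_ge_atTop 0] with t ht using cosh_pow_mul_exp_neg_le n hx ht

lemma coshMoment_two {x : ℝ} (hx : 0 < x) :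
    coshMoment 2 x = coshMoment 0 x + coshMoment 1 x / x := by
  set g : ℕ → ℝ → ℝ := fun n t => cosh t ^ n * exp (-(x * cosh t))
  have hint : ∀ n, IntegrableOn (g n) (Ioi 0) := fun n => integrableOn_cosh_pow_mul_exp_neg n hx
  have hderiv : ∀ t ∈ Ioi (0 : ℝ), HasDerivAt (fun t => sinh t * exp (-(x * cosh t)))
      (g 1 t - x * (g 2 t - g 0 t)) t := fun t _ => by
    refine ((hasDerivAt_sinh t).mul ((hasDerivAt_cosh t).const_mul x).neg.exp).congr_deriv ?_
    simp only [g, Pi.neg_apply, pow_one, pow_zero, one_mul]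
    linear_combination x * exp (-(x * cosh t)) * cosh_sq_sub_sinh_sq t
  have hlim : Tendsto (fun t => sinh t * exp (-(x * cosh t))) atTop (𝓝 0) := by
    refine squeeze_zero_norm (fun t => ?_) (tendsto_cosh_pow_mul_exp_neg_atTop 1 hx)
    rw [norm_mul, norm_of_nonneg (exp_pos _).le, pow_one, norm_eq_abs, abs_sinh, ← cosh_abs t]
    gcongr
    exact (sinh_lt_cosh _).le
  have hint' : IntegrableOn (fun t => x * (g 2 t - g 0 t)) (Ioi 0) :=
    ((hint 2).sub (hint 0)).const_mul x
  have hparts := integral_Ioi_of_hasDerivAt_of_tendsto (by fun_prop) hderiv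
    ((hint 1).sub hint') hlim
  have hsplit : ∫ t in Ioi 0, g 1 t - x * (g 2 t - g 0 t)
      = coshMoment 1 x - x * (coshMoment 2 x - coshMoment 0 x) := by
    rw [integral_sub (hint 1) hint', integral_const_mul, integral_sub (hint 2) (hint 0)]
    rfl
  rw [hsplit, sinh_zero, zero_mul, sub_zero] at hparts
  field_simp
  linarith

lemma K0_eq_coshMoment_zero : K0 = coshMoment 0 := by
  ext x
  simp only [K0, coshMoment, pow_zero, one_mul]

lemma hasDerivAt_coshMoment_half (n : ℕ) {r : ℝ} (hr : 0 < r) :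
    HasDerivAt (fun r => coshMoment n (r / 2)) (-coshMoment (n + 1) (r / 2) / 2) r := by
  refine ((hasDerivAt_coshMoment n (half_pos hr)).comp r
    ((hasDerivAt_id r).div_const 2)).congr_deriv ?_
  ring

lemma hasFDerivAt_norm {F : Type*} [NormedAddCommGroup F] [InnerProductSpace ℝ F] {x : F}
    (hx : x ≠ 0) : HasFDerivAt (fun y : F => ‖y‖) (‖x‖⁻¹ • innerSL ℝ x) x := by
  have h := (hasStrictFDerivAt_norm_sq x).hasFDerivAt.sqrt (by positivity)
  simp only [sqrt_sq (norm_nonneg _)] at h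
  convert h using 1
  ext v
  simp only [smul_apply, coe_innerSL_apply, smul_eq_mul, nsmul_eq_mul, Nat.cast_ofNat]
  field_simp

lemma hasFDerivAt_comp_norm {F : Type*} [NormedAddCommGroup F] [InnerProductSpace ℝ F]
    {f : ℝ → ℝ} {f' : ℝ} {x : F} (hx : x ≠ 0) (hf : HasDerivAt f f' ‖x‖) :
    HasFDerivAt (fun y : F => f ‖y‖) ((f' / ‖x‖) • innerSL ℝ x) x := by
  refine (hf.comp_hasFDerivAt x (hasFDerivAt_norm hx)).congr_fderiv ?_
  rw [smul_smul, div_eq_mul_inv]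

section PartialDerivatives

variable {u v : R2 → ℝ} {x : R2}

lemma pd_eq_of_hasFDerivAt {L : R2 →L[ℝ] ℝ} (h : HasFDerivAt u L x) (i : Fin 2) :
    pd i u x = L (e2 i) := by
  rw [pd, h.fderiv]

lemma pd_congr_of_eventuallyEq (h : u =ᶠ[𝓝 x] v) (i : Fin 2) : pd i u x = pd i v x := by
  rw [pd, pd, h.fderiv_eq]

lemma pd_add (hu : DifferentiableAt ℝ u x) (hv : DifferentiableAt ℝ v x) (i : Fin 2) :
    pd i (fun y => u y + v y) x = pd i u x + pd i v x :=
  pd_eq_of_hasFDerivAt (u := fun y => u y + v y) (hu.hasFDerivAt.add hv.hasFDerivAt) i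

lemma pd_mul (hu : DifferentiableAt ℝ u x) (hv : DifferentiableAt ℝ v x) (i : Fin 2) :
    pd i (fun y => u y * v y) x = pd i u x * v x + u x * pd i v x := by
  rw [pd_eq_of_hasFDerivAt (u := fun y => u y * v y) (hu.hasFDerivAt.mul hv.hasFDerivAt)]
  simp only [add_apply, smul_apply, smul_eq_mul, pd]
  ring

lemma pd2_mul (hu : ∀ᶠ y in 𝓝 x, DifferentiableAt ℝ u y) (hv : ∀ᶠ y in 𝓝 x, DifferentiableAt ℝ v y)
    {i j : Fin 2} (hu' : DifferentiableAt ℝ (pd j u) x) (hv' : DifferentiableAt ℝ (pd j v) x) :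
    pd2 i j (fun y => u y * v y) x
      = pd2 i j u x * v x + pd j u x * pd i v x + pd i u x * pd j v x + u x * pd2 i j v x := by
  have hleibniz : (fun y => pd j (fun y => u y * v y) y) =ᶠ[𝓝 x]
      fun y => pd j u y * v y + u y * pd j v y :=
    (hu.and hv).mono fun y h => pd_mul h.1 h.2 j
  have hux := hu.self_of_nhds
  have hvx := hv.self_of_nhds
  rw [pd2, pd_congr_of_eventuallyEq hleibniz,
    pd_add (u := fun y => pd j u y * v y) (v := fun y => u y * pd j v y)
      (hu'.mul hvx) (hux.mul hv'),
    pd_mul hu' hvx, pd_mul hux hv']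
  simp only [pd2]
  ring

end PartialDerivatives

lemma hasFDerivAt_exp_neg_half_coord (x : R2) :
    HasFDerivAt (fun y : R2 => exp (-(y 0) / 2))
      ((-(exp (-(x 0) / 2) / 2)) • EuclideanSpace.proj (𝕜 := ℝ) (0 : Fin 2)) x := by
  have h := ((hasDerivAt_neg (x 0)).div_const 2).exp.comp_hasFDerivAt x
    (EuclideanSpace.proj 0 : R2 →L[ℝ] ℝ).hasFDerivAt
  refine h.congr_fderiv ?_
  congr 1
  ring

lemma pd_exp_neg_half_coord (i : Fin 2) :
    pd i (fun y : R2 => exp (-(y 0) / 2)) = fun y => -(e2 i 0 / 2) * exp (-(y 0) / 2) := by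
  ext x
  rw [pd_eq_of_hasFDerivAt (hasFDerivAt_exp_neg_half_coord x)]
  simp only [neg_smul, neg_apply, smul_apply, PiLp.proj_apply, smul_eq_mul]
  ring

lemma pd2_exp_neg_half_coord (i : Fin 2) (x : R2) :
    pd2 i i (fun y : R2 => exp (-(y 0) / 2)) x = (e2 i 0 / 2) ^ 2 * exp (-(x 0) / 2) := by
  rw [pd2, pd_exp_neg_half_coord,
    pd_eq_of_hasFDerivAt ((hasFDerivAt_exp_neg_half_coord x).const_mul _)]
  simp only [neg_smul, smul_neg, neg_neg, smul_apply, PiLp.proj_apply, smul_eq_mul]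
  ring

lemma laplacian_add_pd_zero_exp_neg_half_coord_mul {g : R2 → ℝ} {x : R2}
    (hg : ∀ᶠ y in 𝓝 x, DifferentiableAt ℝ g y) (hg' : ∀ k, DifferentiableAt ℝ (pd k g) x) :
    (∑ k, pd2 k k (fun y => exp (-(y 0) / 2) * g y) x)
        + pd 0 (fun y => exp (-(y 0) / 2) * g y) x
      = exp (-(x 0) / 2) * (∑ k, pd2 k k g x - g x / 4) := by
  have hE : ∀ y : R2, DifferentiableAt ℝ (fun y : R2 => exp (-(y 0) / 2)) y :=
    fun y => (hasFDerivAt_exp_neg_half_coord y).differentiableAt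
  have hE' : ∀ k, DifferentiableAt ℝ (pd k fun y : R2 => exp (-(y 0) / 2)) x := fun k => by
    rw [pd_exp_neg_half_coord]
    exact (hE x).const_mul _
  simp only [Fin.sum_univ_two, pd2_mul (.of_forall hE) hg (hE' _) (hg' _),
    pd_mul (hE x) hg.self_of_nhds, pd_exp_neg_half_coord, pd2_exp_neg_half_coord]
  simp only [e2, PiLp.single_eq_same, ne_eq, zero_ne_one, not_false_eq_true, PiLp.single_eq_of_ne]
  ring

section Radial

variable {f f' : ℝ → ℝ} {f'' : ℝ} {x : R2}

lemma pd_comp_norm (hx : x ≠ 0) {d : ℝ} (hf : HasDerivAt f d ‖x‖) (i : Fin 2) :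
    pd i (fun y => f ‖y‖) x = d / ‖x‖ * x i := by
  rw [pd_eq_of_hasFDerivAt (hasFDerivAt_comp_norm hx hf)]
  simp [e2, EuclideanSpace.inner_single_right]

lemma hasFDerivAt_pd_comp_norm (hx : x ≠ 0) (hf : ∀ r > 0, HasDerivAt f (f' r) r)
    (hf' : HasDerivAt f' f'' ‖x‖) (i : Fin 2) :
    HasFDerivAt (pd i fun y => f ‖y‖)
      ((f' ‖x‖ / ‖x‖) • EuclideanSpace.proj (𝕜 := ℝ) i
        + (x i * (f'' - f' ‖x‖ / ‖x‖) / ‖x‖ ^ 2) • innerSL ℝ x) x := by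
  have hr : 0 < ‖x‖ := norm_pos_iff.mpr hx
  have hpd : (pd i fun y => f ‖y‖) =ᶠ[𝓝 x] fun y => f' ‖y‖ / ‖y‖ * y i :=
    (isOpen_ne.eventually_mem hx).mono fun y hy =>
      pd_comp_norm hy (hf _ (norm_pos_iff.mpr hy)) i
  have h := (hasFDerivAt_comp_norm hx (hf'.div (hasDerivAt_id _) hr.ne')).mul
    (EuclideanSpace.proj i : R2 →L[ℝ] ℝ).hasFDerivAt
  refine (h.congr_fderiv ?_).congr_of_eventuallyEq hpd
  ext v
  simp only [Pi.div_apply, id_eq, PiLp.proj_apply, mul_one, add_apply, smul_apply, smul_eq_mul,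
    coe_innerSL_apply, add_right_inj]
  field_simp

lemma pd2_comp_norm (hx : x ≠ 0) (hf : ∀ r > 0, HasDerivAt f (f' r) r)
    (hf' : HasDerivAt f' f'' ‖x‖) (i : Fin 2) :
    pd2 i i (fun y => f ‖y‖) x = f' ‖x‖ / ‖x‖ + x i ^ 2 * (f'' - f' ‖x‖ / ‖x‖) / ‖x‖ ^ 2 := by
  rw [pd2, pd_eq_of_hasFDerivAt (hasFDerivAt_pd_comp_norm hx hf hf' i)]
  simp only [e2, add_apply, smul_apply, PiLp.proj_apply, PiLp.single_eq_same, smul_eq_mul, mul_one,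
    coe_innerSL_apply, EuclideanSpace.inner_single_right, ringHom_apply, one_mul]
  ring

lemma laplacian_comp_norm (hx : x ≠ 0) (hf : ∀ r > 0, HasDerivAt f (f' r) r)
    (hf' : HasDerivAt f' f'' ‖x‖) :
    ∑ k, pd2 k k (fun y => f ‖y‖) x = f'' + f' ‖x‖ / ‖x‖ := by
  have hr : 0 < ‖x‖ := norm_pos_iff.mpr hx
  have hnorm : ‖x‖ ^ 2 = x 0 ^ 2 + x 1 ^ 2 := by
    simp [EuclideanSpace.norm_sq_eq, Fin.sum_univ_two]
  rw [Fin.sum_univ_two, pd2_comp_norm hx hf hf', pd2_comp_norm hx hf hf']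
  field_simp
  linear_combination (f' ‖x‖ - ‖x‖ * f'') * hnorm

lemma eventually_differentiableAt_comp_norm (hx : x ≠ 0)
    (hf : ∀ r > 0, HasDerivAt f (f' r) r) :
    ∀ᶠ y in 𝓝 x, DifferentiableAt ℝ (fun z : R2 => f ‖z‖) y :=
  (isOpen_ne.eventually_mem hx).mono fun _ hy =>
    (hasFDerivAt_comp_norm hy (hf _ (norm_pos_iff.mpr hy))).differentiableAt

end Radial

/-- φ₀(x) = e^{−x₁/2} K₀(|x|/2) satisfies Δφ₀ + ∂₁φ₀ = 0 on ℝ² \ {0}. -/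
theorem stmt13 :
    ∀ x : R2, x ≠ 0 →
      (∑ k, pd2 k k (fun y => Real.exp (-(y 0) / 2) * K0 (‖y‖ / 2)) x)
        + pd 0 (fun y => Real.exp (-(y 0) / 2) * K0 (‖y‖ / 2)) x = 0 := by
  intro x hx
  have hr : 0 < ‖x‖ := norm_pos_iff.mpr hx
  have hf : ∀ r > 0, HasDerivAt (fun r => K0 (r / 2)) (-coshMoment 1 (r / 2) / 2) r := by
    rw [K0_eq_coshMoment_zero]
    exact fun _ => hasDerivAt_coshMoment_half 0
  have hf' : HasDerivAt (fun r => -coshMoment 1 (r / 2) / 2) (coshMoment 2 (‖x‖ / 2) / 4) ‖x‖ := by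
    refine ((hasDerivAt_coshMoment_half 1 hr).neg.div_const 2).congr_deriv ?_
    ring
  rw [laplacian_add_pd_zero_exp_neg_half_coord_mul (eventually_differentiableAt_comp_norm hx hf)
      fun k => (hasFDerivAt_pd_comp_norm hx hf hf' k).differentiableAt,
    laplacian_comp_norm hx hf hf', coshMoment_two (half_pos hr), K0_eq_coshMoment_zero]
  field_simp
  ring
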